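/- arXiv:2603.03758 — 2 statements merged into one kernel-verified Lean document; each statement's English description precedes it below -/
import Mathlib

section
/- Let B and A' be abelian categories with enough injectives, A a full abelian subcategory of B (with enough injectives), and F : B → Ab a left exact functor. For each i ≥ 1 there are natural comparison maps ψ^i : R^i_A F → R^i_B F between the derived functors computed in A and in B. Suppose X ∈ A satisfies: (i) ψ^i(X) is bijective, and (ii) there exists J ∈ A and a monomorphism X ↪ J in A such that R^i_B F(J) = 0, R^k_A F(J) = 0 for k ∈ {i, i+1}, and ψ^i(J/X) is bijective. Then ψ^{i+1}(X) is injective. -/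
open CategoryTheory CategoryTheory.Limits

universe v v' u u'

variable (C : Type u) (D : Type u') [Category.{v} C] [Category.{v'} D] [Abelian C] [Abelian D]

/-- A (cohomological) δ-functor from `C` to `D`: a sequence of additive functors
`F n : C ⥤ D` together with connecting morphisms for every short exact sequence,
natural in the short exact sequence, yielding long exact sequences.
The right derived functors of a left exact functor form such a δ-functor. -/
structure DeltaFunctor where
  F : ℕ → C ⥤ D
  δ : ∀ (n : ℕ) (S : ShortComplex C), S.ShortExact →
    ((F n).obj S.X₃ ⟶ (F (n + 1)).obj S.X₁)
  zero_fg : ∀ (n : ℕ) (S : ShortComplex C), S.ShortExact →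
    (F n).map S.f ≫ (F n).map S.g = 0
  zero_gδ : ∀ (n : ℕ) (S : ShortComplex C) (hS : S.ShortExact),
    (F n).map S.g ≫ δ n S hS = 0
  zero_δf : ∀ (n : ℕ) (S : ShortComplex C) (hS : S.ShortExact),
    δ n S hS ≫ (F (n + 1)).map S.f = 0
  exact_mid : ∀ (n : ℕ) (S : ShortComplex C) (hS : S.ShortExact),
    (ShortComplex.mk ((F n).map S.f) ((F n).map S.g) (zero_fg n S hS)).Exact
  exact_g : ∀ (n : ℕ) (S : ShortComplex C) (hS : S.ShortExact),
    (ShortComplex.mk ((F n).map S.g) (δ n S hS) (zero_gδ n S hS)).Exact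
  exact_δ : ∀ (n : ℕ) (S : ShortComplex C) (hS : S.ShortExact),
    (ShortComplex.mk (δ n S hS) ((F (n + 1)).map S.f) (zero_δf n S hS)).Exact
  δ_natural : ∀ (n : ℕ) (S₁ S₂ : ShortComplex C)
    (h₁ : S₁.ShortExact) (h₂ : S₂.ShortExact) (φ : S₁ ⟶ S₂),
    (F n).map φ.τ₃ ≫ δ n S₂ h₂ = δ n S₁ h₁ ≫ (F (n + 1)).map φ.τ₁

variable {C D}

/-- A δ-functor is effaceable in positive degrees (every object embeds into one on
which the higher functors vanish); by Grothendieck's theorem this characterizes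
universal δ-functors, e.g. the right derived functors of a left exact functor on a
category with enough injectives. -/
def DeltaFunctor.Effaceable (T : DeltaFunctor C D) : Prop :=
  ∀ (n : ℕ) (X : C), ∃ (I : C) (m : X ⟶ I), Mono m ∧ IsZero ((T.F (n + 1)).obj I)

/-- A morphism of δ-functors: a family of natural transformations commuting with the
connecting morphisms. -/
def IsDeltaMorphism (T T' : DeltaFunctor C D) (φ : ∀ n, T.F n ⟶ T'.F n) : Prop :=
  ∀ (n : ℕ) (S : ShortComplex C) (hS : S.ShortExact),
    (φ n).app S.X₃ ≫ T'.δ n S hS = T.δ n S hS ≫ (φ (n + 1)).app S.X₁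

namespace DeltaFunctor

variable {C D : Type*} [Category C] [Category D] [Abelian C] [Abelian D]
  (T : DeltaFunctor C D) {S : ShortComplex C}

lemma mono_δ_of_isZero (hS : S.ShortExact) (n : ℕ) (h : IsZero ((T.F n).obj S.X₂)) :
    Mono (T.δ n S hS) :=
  (T.exact_g n S hS).mono_g (h.eq_zero_of_src _)

lemma isIso_δ_of_isZero (hS : S.ShortExact) (n : ℕ) (h : IsZero ((T.F n).obj S.X₂))
    (h' : IsZero ((T.F (n + 1)).obj S.X₂)) : IsIso (T.δ n S hS) :=
  have := T.mono_δ_of_isZero hS n h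
  have : Epi (T.δ n S hS) := (T.exact_δ n S hS).epi_f (h'.eq_zero_of_tgt _)
  isIso_of_mono_of_epi _

end DeltaFunctor

/-- Dimension shifting along `S`: with `S.X₂` acyclic in the relevant degrees, the connecting
maps identify `ψ (n + 1)` at `S.X₁` with `ψ n` at `S.X₃` followed by a monomorphism. -/
lemma mono_app_succ_of_shortExact {A B D : Type*} [Category A] [Category B] [Category D]
    [Abelian A] [Abelian B] [Abelian D] (ι : A ⥤ B) [ι.PreservesZeroMorphisms]
    (TA : DeltaFunctor A D) (TB : DeltaFunctor B D)
    (hι : ∀ (S : ShortComplex A), S.ShortExact → (S.map ι).ShortExact)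
    (ψ : ∀ n, TA.F n ⟶ ι ⋙ TB.F n)
    (hψδ : ∀ (n : ℕ) (S : ShortComplex A) (hS : S.ShortExact),
      (ψ n).app S.X₃ ≫ TB.δ n (S.map ι) (hι S hS) = TA.δ n S hS ≫ (ψ (n + 1)).app S.X₁)
    (n : ℕ) {S : ShortComplex A} (hS : S.ShortExact)
    (hB : IsZero ((TB.F n).obj (ι.obj S.X₂)))
    (hA : IsZero ((TA.F n).obj S.X₂)) (hA' : IsZero ((TA.F (n + 1)).obj S.X₂))
    [Mono ((ψ n).app S.X₃)] :
    Mono ((ψ (n + 1)).app S.X₁) := by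
  have := TA.isIso_δ_of_isZero hS n hA hA'
  rw [← mono_comp_iff_of_isIso (TA.δ n S hS), ← hψδ]
  exact mono_comp' inferInstance (TB.mono_δ_of_isZero (hι S hS) n hB)

theorem comparison_dimension_shift_injective_general
    {A B D : Type} [Category A] [Category B] [Category D]
    [Abelian A] [Abelian B] [Abelian D]
    (ι : A ⥤ B) [ι.Additive]
    (TA : DeltaFunctor A D) (TB : DeltaFunctor B D)
    (hι : ∀ (S : ShortComplex A), S.ShortExact → (S.map ι).ShortExact)
    (ψ : ∀ n, TA.F n ⟶ ι ⋙ TB.F n)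
    (hψδ : ∀ (n : ℕ) (S : ShortComplex A) (hS : S.ShortExact),
      (ψ n).app S.X₃ ≫ TB.δ n (S.map ι) (hι S hS) =
        TA.δ n S hS ≫ (ψ (n + 1)).app S.X₁)
    (i : ℕ)
    (X J : A) (m : X ⟶ J)
    (S : ShortComplex A)
    (hSdef : S = ShortComplex.mk m (Limits.cokernel.π m) (Limits.cokernel.condition m))
    (hS : S.ShortExact)
    (hBJ : IsZero ((TB.F i).obj (ι.obj J)))
    (hAJi : IsZero ((TA.F i).obj J))
    (hAJi1 : IsZero ((TA.F (i + 1)).obj J))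
    (hψiQ : IsIso ((ψ i).app (Limits.cokernel m))) :
    Mono ((ψ (i + 1)).app X) := by
  subst hSdef
  exact mono_app_succ_of_shortExact ι TA TB hι ψ hψδ i hS hBJ hAJi hAJi1

theorem comparison_dimension_shift_injective
    {A B D : Type} [Category A] [Category B] [Category D]
    [Abelian A] [Abelian B] [Abelian D]
    [EnoughInjectives A] [EnoughInjectives B]
    (ι : A ⥤ B) [ι.Full] [ι.Faithful] [ι.Additive]
    [PreservesFiniteLimits ι] [PreservesFiniteColimits ι]      -- ι exact
    (F : B ⥤ D) [F.Additive] [PreservesFiniteLimits F]          -- F left exact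
    (TA : DeltaFunctor A D) (TB : DeltaFunctor B D)
    (eTA : TA.F 0 ≅ ι ⋙ F) (eTB : TB.F 0 ≅ F)
    (hι : ∀ (S : ShortComplex A), S.ShortExact → (S.map ι).ShortExact)
    (ψ : ∀ n, TA.F n ⟶ ι ⋙ TB.F n)
    (hψ0 : ψ 0 = eTA.hom ≫ CategoryTheory.Functor.whiskerLeft ι eTB.inv)
    (hψδ : ∀ (n : ℕ) (S : ShortComplex A) (hS : S.ShortExact),
      (ψ n).app S.X₃ ≫ TB.δ n (S.map ι) (hι S hS) =
        TA.δ n S hS ≫ (ψ (n + 1)).app S.X₁)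
    (i : ℕ) (hi : 1 ≤ i)
    (X J : A) (m : X ⟶ J) [Mono m]
    (S : ShortComplex A)
    (hSdef : S = ShortComplex.mk m (Limits.cokernel.π m) (Limits.cokernel.condition m))
    (hS : S.ShortExact)
    (hψiX : IsIso ((ψ i).app X))
    (hBJ : IsZero ((TB.F i).obj (ι.obj J)))
    (hAJi : IsZero ((TA.F i).obj J))
    (hAJi1 : IsZero ((TA.F (i + 1)).obj J))
    (hψiQ : IsIso ((ψ i).app (Limits.cokernel m))) :
    Mono ((ψ (i + 1)).app X) :=
  comparison_dimension_shift_injective_general ι TA TB hι ψ hψδ i X J m S hSdef hS hBJ hAJi hAJi1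
    hψiQ
end

section
/- Let G be a flat affine k-groupoid scheme acting on S = Spec(R). (1) The category of G-modules has enough injectives. (2) A G-module V is injective if and only if there exists an injective R-module I such that V is a direct summand of I ⊗_t O(G), where I carries the trivial G-action and O(G) the regular coaction. -/
/-!
STATEMENT 14: Let `G` be a flat affine `k`-groupoid scheme acting on `S = Spec R`.
(1) The category of `G`-modules has enough injectives.
(2) A `G`-module `V` is injective iff there is an injective `R`-module `I` such that
`V` is a direct summand of `I ⊗_t O(G)` (trivial `G`-action on `I`, regular coaction
on `O(G)`).

We formalize the category of `G`-modules abstractly as an abelian category `C`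
equipped with a faithful exact forgetful functor `U : C ⥤ ModuleCat R`
(restriction to the trivial subgroupoid) admitting a right adjoint
`I₀ = (– ⊗_t O(G))` (induction from the trivial subgroupoid; this adjunction is
Frobenius reciprocity `Hom_G(U', I ⊗_t O(G)) ≅ Hom_R(U U', I)`). -/

open CategoryTheory CategoryTheory.Limits

/-- A retract of an injective object is injective. -/
lemma injective_of_retract' {C : Type*} [Category C] {V W : C} [Injective W]
    (sec : V ⟶ W) (ret : W ⟶ V) (h : sec ≫ ret = 𝟙 V) : Injective V where
  factors {A B} g f _ := by
    refine ⟨Injective.factorThru (g ≫ sec) f ≫ ret, ?_⟩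
    rw [← Category.assoc, Injective.comp_factorThru, Category.assoc, h, Category.comp_id]

theorem rep_groupoid_enough_injectives
    {R : Type} [CommRing R]
    {C : Type} [Category C] [Abelian C]
    (U : C ⥤ ModuleCat R) (I₀ : ModuleCat R ⥤ C)
    (adj : U ⊣ I₀)
    [U.Faithful] [U.Additive]
    [PreservesFiniteLimits U] [PreservesFiniteColimits U] :
    EnoughInjectives C ∧
      (∀ V : C, Injective V ↔
        ∃ (I : ModuleCat R), Injective I ∧
          ∃ (sec : V ⟶ I₀.obj I) (ret : I₀.obj I ⟶ V), sec ≫ ret = 𝟙 V) := by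
  have hUmono : U.PreservesMonomorphisms := inferInstance
  -- For each `V`, a mono into `I₀.obj I` with `I` injective.
  have key : ∀ V : C, ∃ (I : ModuleCat R), Injective I ∧
      ∃ (g : V ⟶ I₀.obj I), Mono g := by
    intro V
    obtain ⟨I, hI, f, hf⟩ := EnoughInjectives.presentation (C := ModuleCat R) (U.obj V)
    refine ⟨I, hI, adj.homEquiv V I f, ?_⟩
    have hUg : U.map (adj.homEquiv V I f) ≫ adj.counit.app I = f := by
      simp [Adjunction.homEquiv_unit]
    have : Mono (U.map (adj.homEquiv V I f)) := by
      have : Mono (U.map (adj.homEquiv V I f) ≫ adj.counit.app I) := by rw [hUg]; exact hf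
      exact mono_of_mono _ (adj.counit.app I)
    exact U.mono_of_mono_map this
  constructor
  · refine ⟨fun V => ?_⟩
    obtain ⟨I, hI, g, hg⟩ := key V
    have : Injective (I₀.obj I) := Injective.injective_of_adjoint adj I
    exact ⟨⟨I₀.obj I, this, g, hg⟩⟩
  · intro V
    constructor
    · intro hV
      obtain ⟨I, hI, g, hg⟩ := key V
      have hinj : Injective (I₀.obj I) := Injective.injective_of_adjoint adj I
      exact ⟨I, hI, g, Injective.factorThru (𝟙 V) g, Injective.comp_factorThru _ _⟩
    · rintro ⟨I, hI, sec, ret, h⟩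
      have : Injective (I₀.obj I) := Injective.injective_of_adjoint adj I
      exact injective_of_retract' sec ret h
end
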